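/- Let G be a finite group acting on a finite set of size p via a permutation representation π, and let ρ be the regular representation of G. If f₁,…,f_p ∈ ℂ^p are the columns of the matrices π(g) for g ranging over G, arranged as block rows Θ = (1/√|G|) [π(g₁ g₁^{-1}); π(g₂ g₁^{-1}); … ; π(g_r g₁^{-1})], then the columns of Θ form an orthonormal basis for K_G(ρ,π) = ⋂_{g∈G} ker[I_r ⊗ π(g) − ρ(g)^T ⊗ I_p]. -/

import Mathlib

open Matrix Kronecker

/-- The regular representation of a finite group `G`. -/
def regRep (G : Type*) [Group G] [DecidableEq G] (g : G) : Matrix G G ℂ :=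
  Matrix.of fun i j => if g * j = i then 1 else 0

theorem stmt5 {G : Type*} [Group G] [Fintype G] [DecidableEq G] {p : ℕ}
    (π : G →* Matrix (Fin p) (Fin p) ℂ)
    (hperm : ∀ g : G, ∃ σ : Equiv.Perm (Fin p),
      ∀ i j, π g i j = if σ j = i then 1 else 0)
    (g₁ : G)
    (Θ : Matrix (G × Fin p) (Fin p) ℂ)
    (hΘ : ∀ q j, Θ q j =
      (((Real.sqrt (Fintype.card G))⁻¹ : ℝ) : ℂ) * π (q.1 * g₁⁻¹) q.2 j) :
    Θᴴ * Θ = 1 ∧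
    LinearMap.range Θ.mulVecLin =
      ⨅ g : G, LinearMap.ker (Matrix.mulVecLin
        ((1 : Matrix G G ℂ) ⊗ₖ π g
          - (regRep G g)ᵀ ⊗ₖ (1 : Matrix (Fin p) (Fin p) ℂ))) := by
  set r : ℕ := Fintype.card G with hr
  have hr0 : 0 < (r : ℝ) := by exact_mod_cast Fintype.card_pos
  set c : ℂ := (((Real.sqrt r)⁻¹ : ℝ) : ℂ) with hc
  have hsq : (Real.sqrt r) ≠ 0 := by positivity
  have hcsq : c * ((Real.sqrt r : ℝ) : ℂ) = 1 := by
    rw [hc, ← Complex.ofReal_mul, inv_mul_cancel₀ hsq, Complex.ofReal_one]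
  have hccr : c * c * (r : ℂ) = 1 := by
    have : ((Real.sqrt r : ℝ) : ℂ) * ((Real.sqrt r : ℝ) : ℂ) = (r : ℂ) := by
      rw [← Complex.ofReal_mul, Real.mul_self_sqrt hr0.le]
      push_cast; ring
    calc c * c * (r:ℂ) = (c * ((Real.sqrt r : ℝ) : ℂ)) * (c * ((Real.sqrt r : ℝ) : ℂ)) := by
          rw [← this]; ring
      _ = 1 := by rw [hcsq]; ring
  -- star of entries
  have hstar : ∀ g i j, star (π g i j) = π g i j := by
    intro g i j
    obtain ⟨σ, hσ⟩ := hperm g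
    rw [hσ]; split <;> simp
  -- column orthonormality
  have hcol : ∀ g (j k : Fin p), ∑ i, π g i j * π g i k = if j = k then 1 else 0 := by
    intro g j k
    obtain ⟨σ, hσ⟩ := hperm g
    simp only [hσ, ite_mul, one_mul, zero_mul]
    rw [Finset.sum_ite_eq Finset.univ (σ j)]
    simp [EmbeddingLike.apply_eq_iff_eq, eq_comm]
  constructor
  · ext j k
    rw [Matrix.mul_apply]
    simp only [conjTranspose_apply, hΘ, star_mul', hstar, Complex.star_def,
      ← hc, Fintype.sum_prod_type]
    have : ∀ g : G, ∑ i, (starRingEnd ℂ) c * π (g * g₁⁻¹) i j * (c * π (g * g₁⁻¹) i k)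
        = c * c * (if j = k then 1 else 0) := by
      intro g
      have hcs : (starRingEnd ℂ) c = c := by
        rw [hc]; exact Complex.conj_ofReal _
      rw [← hcol (g * g₁⁻¹) j k, Finset.mul_sum]
      refine Finset.sum_congr rfl fun i _ => ?_
      rw [hcs]; ring
    rw [Finset.sum_congr rfl fun g _ => this g, Finset.sum_const, Finset.card_univ]
    simp only [nsmul_eq_mul, ← hr]
    rw [← mul_assoc, mul_comm (r:ℂ), hccr, one_mul]
    rw [Matrix.one_apply]
  · -- characterize mulVec of the Kronecker difference
    have key : ∀ (g : G) (x : (G × Fin p) → ℂ) (h : G) (i : Fin p),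
        (((1 : Matrix G G ℂ) ⊗ₖ π g
          - (regRep G g)ᵀ ⊗ₖ (1 : Matrix (Fin p) (Fin p) ℂ)).mulVec x) (h, i)
          = (∑ j, π g i j * x (h, j)) - x (g * h, i) := by
      intro g x h i
      simp only [mulVec, dotProduct, Fintype.sum_prod_type, Matrix.sub_apply,
        kroneckerMap_apply, one_apply, regRep, transpose_apply, Matrix.of_apply,
        sub_mul, ite_mul, one_mul, zero_mul, Finset.sum_sub_distrib,
        ← Finset.sum_ite_eq Finset.univ, Finset.sum_ite_irrel, Finset.sum_ite_eq,
        Finset.mem_univ, if_true]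
      simp [Finset.sum_ite_eq']
    -- membership in the iInf
    have hmem : ∀ x : (G × Fin p) → ℂ,
        (x ∈ ⨅ g : G, LinearMap.ker (Matrix.mulVecLin
          ((1 : Matrix G G ℂ) ⊗ₖ π g
            - (regRep G g)ᵀ ⊗ₖ (1 : Matrix (Fin p) (Fin p) ℂ)))) ↔
        ∀ (g h : G) (i : Fin p), (∑ j, π g i j * x (h, j)) = x (g * h, i) := by
      intro x
      simp only [Submodule.mem_iInf, LinearMap.mem_ker, mulVecLin_apply]
      constructor
      · intro H g h i
        have := congrFun (H g) (h, i)
        rw [key] at this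
        simpa [sub_eq_zero] using this
      · intro H g
        funext q
        obtain ⟨h, i⟩ := q
        rw [key, H g h i, sub_self]
        rfl
    ext x
    rw [LinearMap.mem_range, hmem]
    constructor
    · rintro ⟨v, rfl⟩ g h i
      simp only [mulVecLin_apply, mulVec, dotProduct, hΘ]
      calc ∑ j, π g i j * ∑ k, c * π (h * g₁⁻¹) j k * v k
          = ∑ k, c * (∑ j, π g i j * π (h * g₁⁻¹) j k) * v k := by
            simp only [Finset.mul_sum]
            rw [Finset.sum_comm]
            refine Finset.sum_congr rfl fun k _ => ?_
            rw [Finset.sum_mul]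
            refine Finset.sum_congr rfl fun j _ => ?_
            ring
        _ = ∑ k, c * π (g * h * g₁⁻¹) i k * v k := by
            refine Finset.sum_congr rfl fun k _ => ?_
            rw [← Matrix.mul_apply, ← _root_.map_mul π, ← mul_assoc]
    · intro H
      refine ⟨fun j => ((Real.sqrt r : ℝ) : ℂ) * x (g₁, j), ?_⟩
      funext q
      obtain ⟨h, i⟩ := q
      simp only [mulVecLin_apply, mulVec, dotProduct, hΘ]
      have := H (h * g₁⁻¹) g₁ i
      rw [inv_mul_cancel_right] at this
      calc ∑ j, c * π (h * g₁⁻¹) i j * (((Real.sqrt r : ℝ) : ℂ) * x (g₁, j))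
          = (c * ((Real.sqrt r : ℝ) : ℂ)) * ∑ j, π (h * g₁⁻¹) i j * x (g₁, j) := by
            rw [Finset.mul_sum]
            refine Finset.sum_congr rfl fun j _ => ?_
            ring
        _ = x (h, i) := by rw [hcsq, one_mul, this]
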